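/- Let ε ∈ (0,1) and 0 < β ≤ ε²/1870. Let F₁, F₂ : ℝ → [0,1] be nondecreasing and measurable with F₁(v) ≤ F₂(v) for all v, F₁(v) ≥ 1 − 1/v for all v > 0, and F₂(v) ≥ 1 − (9/4)·e^{−v/3} for all v ≥ e. Define F̃_i(v) = min(1, F_i(v) + √(8β·F_i(v)·(1−F_i(v))) + 7β). Then for every reserve r with 0 ≤ r ≤ 165/8 (in particular for every r ≤ C* ≈ 20.5782, the larger root of (3/2)·z·e^{−z/6} = 1), AR(r, F₁, F₂) − AR(r, F̃₁, F̃₂) ≤ ε. Consequently, if such an r additionally satisfies AR(r, F₁, F₂) = sup_{r' ≥ 0} AR(r', F₁, F₂) ≥ 1, then sup_{r' ≥ 0} AR(r', F̃₁, F̃₂) ≥ (1 − ε)·sup_{r' ≥ 0} AR(r', F₁, F₂). -/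

import Mathlib

/-!
The revenue lost by shading at reserve `r` is `r (F̃₁(r) - F₁(r)) + ∫_r^∞ (F̃₂ - F₂)`, and
`F̃ - F ≤ √(8β(1 - F)) + min(7β, 1 - F)`. Equal-revenue domination gives `r (1 - F₁(r)) ≤ 1`, so
the reserve term is `O(√β)` for `r ≤ 165/8`. In the integral, `√(8β(1 - F₂))` is integrated
against `1 - F₂ ≤ min(1, 1/v)` on `(0, 9]` and against the MHR tail `(9/4) e^{-v/3}` beyond `9`.
The `7β` term is kept on `(0, 9]`, and beyond `9` it is replaced by
`min(7β, 1 - F₂) ≤ √(7β(1 - F₂))`, which is integrable. Altogether the loss is at most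
`38 √β + 208 β`, which is at most `ε` once `β ≤ ε²/1870`.
-/

open MeasureTheory

/-- The Anonymous Reserve revenue for reserve `r`, when `F1`, `F2` are the CDFs of the
highest and second-highest bid: `AR(r, F1, F2) = r·(1 − F1(r)) + ∫_r^∞ (1 − F2(x)) dx`. -/
noncomputable def AR (r : ℝ) (F1 F2 : ℝ → ℝ) : ℝ :=
  r * (1 - F1 r) + ∫ x in Set.Ioi r, (1 - F2 x)

open Real Set

noncomputable def shading (β p : ℝ) : ℝ :=
  min 1 (p + √(8 * β * p * (1 - p)) + 7 * β)

section Shading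

variable {β p : ℝ}

lemma le_shading (hβ : 0 ≤ β) (hp : p ≤ 1) : p ≤ shading β p :=
  le_min hp (by have := sqrt_nonneg (8 * β * p * (1 - p)); linarith)

lemma shading_le_one : shading β p ≤ 1 := min_le_left _ _

lemma min_le_sqrt_mul {a b : ℝ} (ha : 0 ≤ a) (hb : 0 ≤ b) : min a b ≤ √(a * b) :=
  le_sqrt_of_sq_le <| by
    nlinarith [min_le_left a b, min_le_right a b, le_min ha hb]

lemma shading_sub_le_sqrt_add_min (hβ : 0 ≤ β) :
    shading β p - p ≤ √(8 * β * (1 - p)) + min (7 * β) (1 - p) := by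
  have hsqrt : √(8 * β * p * (1 - p)) ≤ √(8 * β * (1 - p)) :=
    sqrt_le_sqrt (by nlinarith [mul_nonneg hβ (sq_nonneg (1 - p))])
  rcases le_total (7 * β) (1 - p) with h | h
  · rw [min_eq_left h]
    have : shading β p ≤ p + √(8 * β * p * (1 - p)) + 7 * β := min_le_right _ _
    linarith
  · rw [min_eq_right h]
    linarith [shading_le_one (β := β) (p := p), sqrt_nonneg (8 * β * (1 - p))]

lemma shading_sub_le_sqrt_add (hβ : 0 ≤ β) : shading β p - p ≤ √(8 * β * (1 - p)) + 7 * β :=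
  (shading_sub_le_sqrt_add_min hβ).trans (by gcongr; exact min_le_left _ _)

lemma shading_sub_le_sqrt_mul (hβ : 0 ≤ β) (hp : p ≤ 1) :
    shading β p - p ≤ (√8 + √7) * √(β * (1 - p)) := by
  have hmin := min_le_sqrt_mul (by positivity : 0 ≤ 7 * β) (sub_nonneg.2 hp)
  have h8 : √(8 * β * (1 - p)) = √8 * √(β * (1 - p)) := by
    rw [mul_assoc, sqrt_mul (by norm_num)]
  have h7 : √(7 * β * (1 - p)) = √7 * √(β * (1 - p)) := by
    rw [mul_assoc, sqrt_mul (by norm_num)]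
  linarith [shading_sub_le_sqrt_add_min (p := p) hβ]

lemma mul_shading_sub_le {r : ℝ} (hβ : 0 ≤ β) (hr : 0 ≤ r) (hrp : r * (1 - p) ≤ 1) :
    r * (shading β p - p) ≤ √(8 * β * r) + 7 * β * r := by
  have hsqrt : r * √(8 * β * (1 - p)) ≤ √(8 * β * r) := by
    rw [← sqrt_sq hr, ← sqrt_mul (sq_nonneg r), sqrt_sq hr]
    exact sqrt_le_sqrt (by nlinarith [mul_nonneg hβ hr])
  nlinarith [shading_sub_le_sqrt_add (p := p) hβ]

end Shading

lemma AR_sub_AR_eq {r : ℝ} {F1 F2 G1 G2 : ℝ → ℝ}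
    (hF2 : IntegrableOn (fun x => 1 - F2 x) (Ioi r))
    (hG2 : IntegrableOn (fun x => 1 - G2 x) (Ioi r)) :
    AR r F1 F2 - AR r G1 G2 = r * (G1 r - F1 r) + ∫ x in Ioi r, (G2 x - F2 x) := by
  have hsub : ∫ x in Ioi r, (G2 x - F2 x) =
      (∫ x in Ioi r, (1 - F2 x)) - ∫ x in Ioi r, (1 - G2 x) := by
    rw [← integral_sub hF2 hG2]
    congr 1 with x
    ring
  rw [AR, AR, hsub]
  ring

lemma exp_neg_div_eq (c : ℝ) : (fun x => exp (-x / c)) = fun x => exp (-c⁻¹ * x) := by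
  funext x; ring_nf

lemma integrableOn_exp_neg_div_Ioi {c : ℝ} (hc : 0 < c) (a : ℝ) :
    IntegrableOn (fun x => exp (-x / c)) (Ioi a) := by
  simpa only [exp_neg_div_eq] using integrableOn_exp_mul_Ioi (neg_lt_zero.2 (inv_pos.2 hc)) a

lemma integral_exp_neg_div_Ioi {c : ℝ} (hc : 0 < c) (a : ℝ) :
    ∫ x in Ioi a, exp (-x / c) = c * exp (-a / c) := by
  rw [exp_neg_div_eq, integral_exp_mul_Ioi (neg_lt_zero.2 (inv_pos.2 hc))]
  field_simp

lemma intervalIntegrable_inv_sqrt {a b : ℝ} (ha : 0 < a) (hb : 0 < b) :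
    IntervalIntegrable (fun x => (√x)⁻¹) volume a b :=
  (continuous_sqrt.continuousOn.inv₀ fun _ hx =>
    (sqrt_pos.2 (lt_min ha hb |>.trans_le hx.1)).ne').intervalIntegrable

lemma integral_inv_sqrt {a b : ℝ} (ha : 0 < a) (hb : 0 < b) :
    ∫ x in a..b, (√x)⁻¹ = 2 * (√b - √a) := by
  rw [intervalIntegral.integral_eq_sub_of_hasDerivAt (f := fun x => 2 * √x)
    (fun x hx => ?_) (intervalIntegrable_inv_sqrt ha hb)]
  · ring
  · have hx0 : x ≠ 0 := (lt_min ha hb |>.trans_le hx.1).ne'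
    exact ((hasDerivAt_sqrt hx0).const_mul 2).congr_deriv (by field_simp)

lemma le_three_mul_exp {t v : ℝ} (ht : t ≤ 1) (htail : exp 1 ≤ v → t ≤ 9 / 4 * exp (-v / 3)) :
    t ≤ 3 * exp (-v / 3) := by
  rcases le_or_gt (exp 1) v with hv | hv
  · linarith [htail hv, exp_pos (-v / 3)]
  · have he : exp 1 * exp (-1) = 1 := by rw [← exp_add]; simp
    have hdecay : exp (-1) ≤ exp (-v / 3) := exp_le_exp.2 (by linarith [exp_one_lt_d9])
    nlinarith [exp_one_lt_d9, exp_pos (-1)]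

section Tail

variable {β : ℝ} {F : ℝ → ℝ}

lemma integrableOn_Ioi_of_le_one_sub {f : ℝ → ℝ} (hf : Measurable f) (hf0 : ∀ x, 0 ≤ f x)
    (hfF : ∀ x, f x ≤ 1 - F x) (hF0 : ∀ v, 0 ≤ F v)
    (hexp : ∀ v, exp 1 ≤ v → 1 - F v ≤ 9 / 4 * exp (-v / 3)) (a : ℝ) :
    IntegrableOn f (Ioi a) :=
  ((integrableOn_exp_neg_div_Ioi three_pos a).const_mul 3).mono' hf.aestronglyMeasurable
    (ae_of_all _ fun x => by
      rw [Real.norm_of_nonneg (hf0 x)]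
      exact (hfF x).trans (le_three_mul_exp (by linarith [hF0 x]) (hexp x)))

lemma integral_zero_one_shading_sub_le (hβ : 0 ≤ β) (hF0 : ∀ v, 0 ≤ F v)
    (hD : IntervalIntegrable (fun x => shading β (F x) - F x) volume 0 1) :
    ∫ x in (0 : ℝ)..1, (shading β (F x) - F x) ≤ √(8 * β) + 7 * β := by
  calc ∫ x in (0 : ℝ)..1, (shading β (F x) - F x)
      ≤ ∫ _ in (0 : ℝ)..1, (√(8 * β) + 7 * β) :=
        intervalIntegral.integral_mono_on zero_le_one hD intervalIntegrable_const fun x _ =>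
          (shading_sub_le_sqrt_add hβ).trans <|
            add_le_add_left (sqrt_le_sqrt (by nlinarith [hF0 x])) _
    _ = √(8 * β) + 7 * β := by simp

lemma integral_one_nine_shading_sub_le (hβ : 0 ≤ β) (hinv : ∀ v, 0 < v → 1 - F v ≤ 1 / v)
    (hD : IntervalIntegrable (fun x => shading β (F x) - F x) volume 1 9) :
    ∫ x in (1 : ℝ)..9, (shading β (F x) - F x) ≤ 4 * √(8 * β) + 56 * β := by
  have hbound : ∀ x ∈ Icc (1 : ℝ) 9,
      shading β (F x) - F x ≤ √(8 * β) * (√x)⁻¹ + 7 * β := fun x hx => by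
    have hx : 0 < x := one_pos.trans_le hx.1
    refine (shading_sub_le_sqrt_add hβ).trans ?_
    rw [← sqrt_inv, ← sqrt_mul (by positivity)]
    gcongr
    simpa [one_div] using hinv x hx
  calc ∫ x in (1 : ℝ)..9, (shading β (F x) - F x)
      ≤ ∫ x in (1 : ℝ)..9, (√(8 * β) * (√x)⁻¹ + 7 * β) :=
        intervalIntegral.integral_mono_on (by norm_num) hD
          (((intervalIntegrable_inv_sqrt one_pos (by norm_num)).const_mul _).add
            intervalIntegrable_const) hbound
    _ = 4 * √(8 * β) + 56 * β := by
      rw [intervalIntegral.integral_add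
        ((intervalIntegrable_inv_sqrt one_pos (by norm_num)).const_mul _) intervalIntegrable_const,
        intervalIntegral.integral_const_mul, integral_inv_sqrt one_pos (by norm_num),
        show (9 : ℝ) = 3 ^ 2 by norm_num, sqrt_sq (by norm_num), sqrt_one,
        intervalIntegral.integral_const, smul_eq_mul]
      ring

lemma integral_Ioi_shading_sub_le_of_exp_le {a : ℝ} (ha : exp 1 ≤ a) (hβ : 0 ≤ β)
    (hF1 : ∀ v, F v ≤ 1) (hexp : ∀ v, exp 1 ≤ v → 1 - F v ≤ 9 / 4 * exp (-v / 3))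
    (hD : IntegrableOn (fun x => shading β (F x) - F x) (Ioi a)) :
    ∫ x in Ioi a, (shading β (F x) - F x) ≤ 9 * (√8 + √7) * exp (-a / 6) * √β := by
  have hbound : ∀ x ∈ Ioi a,
      shading β (F x) - F x ≤ (√8 + √7) * (3 / 2 * √β) * exp (-x / 6) := fun x hx => by
    refine (shading_sub_le_sqrt_mul hβ (hF1 x)).trans ?_
    rw [mul_assoc]
    gcongr
    have hsq : exp (-x / 6) ^ 2 = exp (-x / 3) := by rw [← exp_nat_mul]; ring_nf
    refine sqrt_le_iff.2 ⟨by positivity, ?_⟩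
    rw [mul_pow, mul_pow, sq_sqrt hβ, hsq]
    nlinarith [hexp x (ha.trans hx.le)]
  calc ∫ x in Ioi a, (shading β (F x) - F x)
      ≤ ∫ x in Ioi a, (√8 + √7) * (3 / 2 * √β) * exp (-x / 6) :=
        setIntegral_mono_on hD ((integrableOn_exp_neg_div_Ioi (by norm_num) a).const_mul _)
          measurableSet_Ioi hbound
    _ = 9 * (√8 + √7) * exp (-a / 6) * √β := by
      rw [integral_const_mul, integral_exp_neg_div_Ioi (by norm_num)]
      ring

end Tail

lemma integral_Ioi_shading_sub_le {β r : ℝ} {F : ℝ → ℝ} (hβ : 0 ≤ β) (hr : 0 ≤ r)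
    (hmeas : Measurable F) (hF : ∀ v, F v ∈ Icc 0 1) (hinv : ∀ v, 0 < v → 1 - F v ≤ 1 / v)
    (hexp : ∀ v, exp 1 ≤ v → 1 - F v ≤ 9 / 4 * exp (-v / 3)) :
    ∫ x in Ioi r, (shading β (F x) - F x) ≤
      5 * √(8 * β) + 63 * β + 9 * (√8 + √7) * exp (-3 / 2) * √β := by
  set D := fun x => shading β (F x) - F x
  have hD0 : ∀ x, 0 ≤ D x := fun x => sub_nonneg.2 (le_shading hβ (hF x).2)
  have hD : ∀ a, IntegrableOn D (Ioi a) :=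
    integrableOn_Ioi_of_le_one_sub (by simp only [D, shading]; fun_prop) hD0
      (fun x => by simp only [D]; linarith [shading_le_one (β := β) (p := F x)])
      (fun v => (hF v).1) hexp
  have hDi : ∀ a b, a ≤ b → IntervalIntegrable D volume a b := fun a b hab =>
    (intervalIntegrable_iff_integrableOn_Ioc_of_le hab).2 ((hD a).mono_set Ioc_subset_Ioi_self)
  have h01 := integral_zero_one_shading_sub_le hβ (fun v => (hF v).1) (hDi 0 1 zero_le_one)
  have h19 := integral_one_nine_shading_sub_le hβ hinv (hDi 1 9 (by norm_num))
  have h9 := integral_Ioi_shading_sub_le_of_exp_le (by linarith [exp_one_lt_d9]) hβ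
    (fun v => (hF v).2) hexp (hD 9)
  calc ∫ x in Ioi r, D x
      ≤ ∫ x in Ioi 0, D x :=
        setIntegral_mono_set (hD 0) (ae_of_all _ hD0) (Ioi_subset_Ioi hr).eventuallyLE
    _ = (∫ x in (0 : ℝ)..1, D x) + ((∫ x in (1 : ℝ)..9, D x) + ∫ x in Ioi 9, D x) := by
      rw [intervalIntegral.integral_interval_add_Ioi (hD 1) (hD 9),
        intervalIntegral.integral_interval_add_Ioi (hD 0) (hD 1)]
    _ ≤ _ := by rw [show (-9 : ℝ) / 6 = -3 / 2 by norm_num] at h9; linarith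

lemma AR_sub_AR_shading_le {β r : ℝ} {F1 F2 : ℝ → ℝ} (hβ : 0 ≤ β) (hr : r ∈ Icc 0 (165 / 8))
    (hmeas2 : Measurable F2) (hF2 : ∀ v, F2 v ∈ Icc 0 1)
    (hinv1 : ∀ v, 0 < v → 1 - F1 v ≤ 1 / v) (hinv2 : ∀ v, 0 < v → 1 - F2 v ≤ 1 / v)
    (hexp2 : ∀ v, exp 1 ≤ v → 1 - F2 v ≤ 9 / 4 * exp (-v / 3)) :
    AR r F1 F2 - AR r (fun v => shading β (F1 v)) (fun v => shading β (F2 v)) ≤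
      (√(165 * β) + 1155 / 8 * β) +
        (5 * √(8 * β) + 63 * β + 9 * (√8 + √7) * exp (-3 / 2) * √β) := by
  have hint : ∀ f : ℝ → ℝ, Measurable f → (∀ x, 0 ≤ f x) → (∀ x, f x ≤ 1 - F2 x) →
      IntegrableOn f (Ioi r) := fun f hf hf0 hfF =>
    integrableOn_Ioi_of_le_one_sub hf hf0 hfF (fun v => (hF2 v).1) hexp2 r
  rw [AR_sub_AR_eq (hint _ (by fun_prop) (fun x => sub_nonneg.2 (hF2 x).2) fun _ => le_rfl)
    (hint _ (by simp only [shading]; fun_prop) (fun x => sub_nonneg.2 shading_le_one)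
      fun x => by linarith [le_shading hβ (hF2 x).2])]
  have hrF1 : r * (1 - F1 r) ≤ 1 := by
    rcases hr.1.eq_or_lt with h0 | h0
    · simp only [← h0, zero_mul, zero_le_one]
    · calc r * (1 - F1 r) ≤ r * (1 / r) := mul_le_mul_of_nonneg_left (hinv1 r h0) h0.le
        _ = 1 := mul_one_div_cancel h0.ne'
  have hreserve : r * (shading β (F1 r) - F1 r) ≤ √(165 * β) + 1155 / 8 * β := by
    refine (mul_shading_sub_le hβ hr.1 hrF1).trans ?_
    have : √(8 * β * r) ≤ √(165 * β) := sqrt_le_sqrt (by nlinarith [hr.2])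
    nlinarith [hr.2]
  linarith [integral_Ioi_shading_sub_le hβ hr.1 hmeas2 hF2 hinv2 hexp2]

lemma exp_neg_three_halves_le : exp (-3 / 2) ≤ 0.2232 := by
  have hcube : exp (3 / 2) ^ 2 = exp 1 ^ 3 := by rw [← exp_nat_mul, ← exp_nat_mul]; norm_num
  have he : (2.7182818283 : ℝ) ^ 3 ≤ exp 1 ^ 3 := by gcongr; exact exp_one_gt_d9.le
  have h32 : 4.4803 ≤ exp (3 / 2) := by nlinarith [exp_pos (3 / 2)]
  rw [show (-3 / 2 : ℝ) = -(3 / 2) by norm_num, exp_neg, inv_le_comm₀ (exp_pos _) (by norm_num)]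
  linarith

lemma smoothness_error_le {ε β : ℝ} (hε : ε ∈ Ioo 0 1) (hβ : β ≤ ε ^ 2 / 1870) :
    (√(165 * β) + 1155 / 8 * β) +
      (5 * √(8 * β) + 63 * β + 9 * (√8 + √7) * exp (-3 / 2) * √β) ≤ ε := by
  have hs : √β ≤ ε / 43 := by
    refine sqrt_le_iff.2 ⟨div_nonneg hε.1.le (by norm_num), ?_⟩
    rw [div_pow]
    linarith [sq_nonneg ε]
  have h165 : √165 ≤ 12.846 := sqrt_le_iff.2 ⟨by norm_num, by norm_num⟩
  have h8 : √8 ≤ 2.8285 := sqrt_le_iff.2 ⟨by norm_num, by norm_num⟩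
  have h7 : √7 ≤ 2.6458 := sqrt_le_iff.2 ⟨by norm_num, by norm_num⟩
  have hK : √165 + 5 * √8 + 9 * ((√8 + √7) * exp (-3 / 2)) ≤ 38 := by
    have := mul_le_mul (add_le_add h8 h7) exp_neg_three_halves_le (exp_pos _).le (by norm_num)
    linarith
  have hKs := mul_le_mul_of_nonneg_right hK (sqrt_nonneg β)
  have hεsq : ε ^ 2 ≤ ε := by nlinarith [hε.1, hε.2]
  calc _ = (√165 + 5 * √8 + 9 * ((√8 + √7) * exp (-3 / 2))) * √β + 1659 / 8 * β := by
        rw [sqrt_mul (by norm_num), sqrt_mul (by norm_num)]; ring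
    _ ≤ ε := by linarith [hε.1]

theorem ar_smoothness_mhr_general
    (ε β : ℝ) (hε : ε ∈ Set.Ioo (0 : ℝ) 1) (hβ0 : 0 < β) (hβ : β ≤ ε ^ 2 / 1870)
    (F1 F2 : ℝ → ℝ)
    (hmeas2 : Measurable F2)
    (hF2 : ∀ v, F2 v ∈ Set.Icc (0 : ℝ) 1)
    (hdom : ∀ v, F1 v ≤ F2 v)
    (htail1 : ∀ v, 0 < v → 1 - 1 / v ≤ F1 v)
    (htail2 : ∀ v, Real.exp 1 ≤ v → 1 - 9 / 4 * Real.exp (-v / 3) ≤ F2 v)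
    (G1 G2 : ℝ → ℝ)
    (hG1 : ∀ v, G1 v = min 1 (F1 v + Real.sqrt (8 * β * F1 v * (1 - F1 v)) + 7 * β))
    (hG2 : ∀ v, G2 v = min 1 (F2 v + Real.sqrt (8 * β * F2 v * (1 - F2 v)) + 7 * β)) :
    (∀ r ∈ Set.Icc (0 : ℝ) (165 / 8), AR r F1 F2 - AR r G1 G2 ≤ ε) ∧
    (∀ r ∈ Set.Icc (0 : ℝ) (165 / 8),
      ((AR r F1 F2 : ℝ) : EReal) = (⨆ r' : ℝ, ⨆ _ : 0 ≤ r', ((AR r' F1 F2 : ℝ) : EReal)) →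
      1 ≤ AR r F1 F2 →
      (((1 - ε) * AR r F1 F2 : ℝ) : EReal) ≤
        ⨆ r' : ℝ, ⨆ _ : 0 ≤ r', ((AR r' G1 G2 : ℝ) : EReal)) := by
  obtain rfl : G1 = fun v => shading β (F1 v) := funext hG1
  obtain rfl : G2 = fun v => shading β (F2 v) := funext hG2
  have hloss : ∀ r ∈ Icc (0 : ℝ) (165 / 8),
      AR r F1 F2 - AR r (fun v => shading β (F1 v)) (fun v => shading β (F2 v)) ≤ ε :=
    fun r hr => (AR_sub_AR_shading_le hβ0.le hr hmeas2 hF2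
      (fun v hv => by linarith [htail1 v hv]) (fun v hv => by linarith [htail1 v hv, hdom v])
      (fun v hv => by linarith [htail2 v hv])).trans (smoothness_error_le hε hβ)
  refine ⟨hloss, fun r hr _ hAR => ?_⟩
  have hshaded : (1 - ε) * AR r F1 F2 ≤
      AR r (fun v => shading β (F1 v)) (fun v => shading β (F2 v)) := by
    nlinarith [hloss r hr, hε.1]
  exact (EReal.coe_le_coe_iff.2 hshaded).trans (le_iSup₂_of_le r hr.1 le_rfl)

/-- Revenue smoothness in the MHR setting: with `0 < β ≤ ε²/1870`, for an instance with
`F1 ≤ F2`, equal-revenue domination `F1(v) ≥ 1 − 1/v`, and MHR tail bound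
`F2(v) ≥ 1 − (9/4)e^{−v/3}` for `v ≥ e`, shading by `S_F^β` loses at most `ε` revenue
for every reserve `r ∈ [0, 165/8]`; hence if such an `r` is an optimal reserve with
`AR(r, F1, F2) ≥ 1`, the optimal shaded revenue is at least `(1 − ε)` times the optimal
revenue. -/
theorem ar_smoothness_mhr
    (ε β : ℝ) (hε : ε ∈ Set.Ioo (0 : ℝ) 1) (hβ0 : 0 < β) (hβ : β ≤ ε ^ 2 / 1870)
    (F1 F2 : ℝ → ℝ) (hmono1 : Monotone F1) (hmono2 : Monotone F2)
    (hmeas1 : Measurable F1) (hmeas2 : Measurable F2)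
    (hF1 : ∀ v, F1 v ∈ Set.Icc (0 : ℝ) 1) (hF2 : ∀ v, F2 v ∈ Set.Icc (0 : ℝ) 1)
    (hdom : ∀ v, F1 v ≤ F2 v)
    (htail1 : ∀ v, 0 < v → 1 - 1 / v ≤ F1 v)
    (htail2 : ∀ v, Real.exp 1 ≤ v → 1 - 9 / 4 * Real.exp (-v / 3) ≤ F2 v)
    (G1 G2 : ℝ → ℝ)
    (hG1 : ∀ v, G1 v = min 1 (F1 v + Real.sqrt (8 * β * F1 v * (1 - F1 v)) + 7 * β))
    (hG2 : ∀ v, G2 v = min 1 (F2 v + Real.sqrt (8 * β * F2 v * (1 - F2 v)) + 7 * β)) :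
    (∀ r ∈ Set.Icc (0 : ℝ) (165 / 8), AR r F1 F2 - AR r G1 G2 ≤ ε) ∧
    (∀ r ∈ Set.Icc (0 : ℝ) (165 / 8),
      ((AR r F1 F2 : ℝ) : EReal) = (⨆ r' : ℝ, ⨆ _ : 0 ≤ r', ((AR r' F1 F2 : ℝ) : EReal)) →
      1 ≤ AR r F1 F2 →
      (((1 - ε) * AR r F1 F2 : ℝ) : EReal) ≤
        ⨆ r' : ℝ, ⨆ _ : 0 ≤ r', ((AR r' G1 G2 : ℝ) : EReal)) :=
  ar_smoothness_mhr_general ε β hε hβ0 hβ F1 F2 hmeas2 hF2 hdom htail1 htail2 G1 G2 hG1 hG2
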